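/- Let ω = (−1 + i√3)/2 and let Q be an n×n complex self-adjoint matrix with Q_{ii} = 0 for all i, with Q_{i1} = Q_{1i} = 1 for all i different from the first index, with Q_{ij} ∈ {1, ω, ω²} for all i ≠ j, and with at least one entry Q_{ij} (i, j different from the first index) not equal to 1. Let μ and e be real numbers with 3e + μ + 2 = n. For indices i, j and x, y ∈ {1, ω, ω²}, write N_{x,y}(i,j) = #{k : Q_{ik} = x and Q_{kj} = y}. Then Q² = (n−1)·I + μ·Q if and only if: (I) for every pair i ≠ j with Q_{ij} = ω, writing α = N_{ω,ω²}(i,j), β = N_{ω,ω}(i,j), γ = N_{ω,1}(i,j), a = N_{ω²,ω²}(i,j), b = N_{ω²,ω}(i,j), c = N_{ω²,1}(i,j), A = N_{1,ω²}(i,j), B = N_{1,ω}(i,j), C = N_{1,1}(i,j), one has α − B = −(2μ+1)/3, β − C = −(2μ+4)/3, γ + B + C = n/3 + μ, a − C = −(μ+2)/3, b + B + C = (n + μ − 1)/3, c − B = (1 − μ)/3, and A + B + C = (n + 2μ + 1)/3; and (II) for every pair i ≠ j, both different from the first index, with Q_{ij} = 1, writing α', β', γ', a', b', c', A', B', C'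 for the corresponding counts N_{ω,ω²}(i,j), N_{ω,ω}(i,j), N_{ω,1}(i,j), N_{ω²,ω²}(i,j), N_{ω²,ω}(i,j), N_{ω²,1}(i,j), N_{1,ω²}(i,j), N_{1,ω}(i,j), N_{1,1}(i,j), one has α' = B', β' = C' − μ, γ' = e + μ − B' − C', a' = C' − μ, b' = e + μ − B' − C', c' = B', and A' = e + μ − B' − C'. -/
import Mathlib


/-- `ω = (−1 + i√3)/2`, a primitive cube root of unity. -/
noncomputable def ω3 : ℂ := (-1 + Complex.I * Real.sqrt 3) / 2

/-- The path count `N_{x,y}(i,j) = #{k : Q_{ik} = x and Q_{kj} = y}`,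
regarded as a real number. -/
noncomputable def pathCount {n : ℕ} (Q : Matrix (Fin n) (Fin n) ℂ)
    (i j : Fin n) (x y : ℂ) : ℝ :=
  (Nat.card {k : Fin n // Q i k = x ∧ Q k j = y} : ℝ)

lemma omega_form : ω3 = (↑(-(1/2) : ℝ)) + (↑(Real.sqrt 3 / 2 : ℝ)) * Complex.I := by
  unfold ω3; push_cast; ring

lemma omega_im : ω3.im = Real.sqrt 3 / 2 := by rw [omega_form]; simp

lemma omega_re : ω3.re = -(1/2) := by rw [omega_form]; simp

lemma sqrt3_ne : Real.sqrt 3 ≠ 0 := by positivity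

lemma homega : ω3 ^ 2 = -1 - ω3 := by
  have hI := Complex.I_sq
  have hs : ((Real.sqrt 3 : ℝ) : ℂ) ^ 2 = 3 := by
    norm_cast
    rw [Real.sq_sqrt]; norm_num
  unfold ω3
  linear_combination (((Real.sqrt 3 : ℝ) : ℂ) ^ 2 / 4) * hI - (1/4) * hs

lemma hcube : ω3 ^ 3 = 1 := by linear_combination (ω3 - 1) * homega

lemma omega_ne_zero : ω3 ≠ 0 := by
  intro h; have := hcube; rw [h] at this; norm_num at this

lemma omega_sq_ne_zero : ω3 ^ 2 ≠ 0 := pow_ne_zero 2 omega_ne_zero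

lemma omega_ne_one : ω3 ≠ 1 := by
  intro h
  have := congrArg Complex.im h
  simp [omega_im, sqrt3_ne] at this

lemma omega_sq_ne_one : ω3 ^ 2 ≠ 1 := by
  intro h
  have := congrArg Complex.im h
  rw [homega] at this
  simp [omega_im, sqrt3_ne] at this

lemma omega_ne_omega_sq : ω3 ≠ ω3 ^ 2 := by
  intro h
  have := congrArg Complex.im h
  rw [homega] at this
  simp [omega_im] at this
  have h0 : Real.sqrt 3 = 0 := by linarith
  exact sqrt3_ne h0

lemma omega_ne_neg_one : ω3 ≠ -1 := by
  intro h
  have := congrArg Complex.im h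
  simp [omega_im, sqrt3_ne] at this

lemma omega_basis {a b : ℝ} (h : (a : ℂ) + (b : ℂ) * ω3 = 0) : a = 0 ∧ b = 0 := by
  have him := congrArg Complex.im h
  simp [omega_im, omega_re, Complex.add_im, Complex.mul_im] at him
  have hb : b = 0 := him
  have hre := congrArg Complex.re h
  simp [omega_re, omega_im, Complex.add_re, Complex.mul_re, hb] at hre
  exact ⟨hre, hb⟩

lemma conj_omega : (starRingEnd ℂ) ω3 = ω3 ^ 2 := by
  apply Complex.ext
  · simp [omega_re, homega, Complex.sub_re, Complex.neg_re]
    norm_num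
  · simp [omega_im, homega, Complex.sub_im, Complex.neg_im]

lemma conj_omega_sq : (starRingEnd ℂ) (ω3 ^ 2) = ω3 := by
  rw [map_pow, conj_omega]
  linear_combination ω3 * hcube


lemma pathCount_eq_sum {n : ℕ} (Q : Matrix (Fin n) (Fin n) ℂ) (i j : Fin n) (x y : ℂ) :
    ((pathCount Q i j x y : ℝ) : ℂ)
      = ∑ k : Fin n, (if Q i k = x ∧ Q k j = y then (1 : ℂ) else 0) := by
  rw [pathCount, Nat.card_eq_fintype_card, Fintype.card_subtype, Finset.card_filter]
  push_cast
  apply Finset.sum_congr rfl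
  intro k _
  split <;> simp

lemma sum_weights {n : ℕ} (Q : Matrix (Fin n) (Fin n) ℂ)
    (hdiag : ∀ i, Q i i = 0)
    (hoff : ∀ i j, i ≠ j → Q i j = 1 ∨ Q i j = ω3 ∨ Q i j = ω3 ^ 2)
    (i j : Fin n) (hij : i ≠ j) (w : ℂ → ℂ → ℂ) :
    ∑ k : Fin n, (if k = i ∨ k = j then 0 else w (Q i k) (Q k j)) =
      (pathCount Q i j 1 1 : ℂ) * w 1 1 + (pathCount Q i j 1 ω3 : ℂ) * w 1 ω3
      + (pathCount Q i j 1 (ω3 ^ 2) : ℂ) * w 1 (ω3 ^ 2)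
      + (pathCount Q i j ω3 1 : ℂ) * w ω3 1 + (pathCount Q i j ω3 ω3 : ℂ) * w ω3 ω3
      + (pathCount Q i j ω3 (ω3 ^ 2) : ℂ) * w ω3 (ω3 ^ 2)
      + (pathCount Q i j (ω3 ^ 2) 1 : ℂ) * w (ω3 ^ 2) 1
      + (pathCount Q i j (ω3 ^ 2) ω3 : ℂ) * w (ω3 ^ 2) ω3
      + (pathCount Q i j (ω3 ^ 2) (ω3 ^ 2) : ℂ) * w (ω3 ^ 2) (ω3 ^ 2) := by
  simp only [pathCount_eq_sum, Finset.sum_mul, ← Finset.sum_add_distrib]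
  apply Finset.sum_congr rfl
  intro k _
  by_cases hk : k = i ∨ k = j
  · rcases hk with rfl | rfl
    · simp [hdiag, omega_ne_zero, omega_sq_ne_zero, (Ne.symm omega_ne_zero),
        (Ne.symm omega_sq_ne_zero)]
    · simp [hdiag, omega_ne_zero, omega_sq_ne_zero, (Ne.symm omega_ne_zero),
        (Ne.symm omega_sq_ne_zero), hij]
  · push_neg at hk
    obtain ⟨hki, hkj⟩ := hk
    rw [if_neg (by tauto)]
    rcases hoff i k (Ne.symm hki) with hx | hx | hx <;>
      rcases hoff k j hkj with hy | hy | hy <;>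
        simp [hx, hy, omega_ne_one, omega_sq_ne_one, omega_ne_omega_sq,
          (Ne.symm omega_ne_one), (Ne.symm omega_sq_ne_one), (Ne.symm omega_ne_omega_sq),
          omega_ne_neg_one, (Ne.symm omega_ne_neg_one)]

lemma keyI_algebra (μ nr : ℝ) (T U V : ℂ) (α β γ a b c A B C : ℝ)
    (hsum : α + β + γ + a + b + c + A + B + C = nr - 2)
    (hT2 : T = ((C + α + b - A - β - c : ℝ) : ℂ) + ((B + γ + a - A - β - c : ℝ) : ℂ) * ω3)
    (hU2 : U = ω3 + ((A + B + C - a - b - c : ℝ) : ℂ) + ((α + β + γ - a - b - c : ℝ) : ℂ) * ω3)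
    (hV2 : V = ω3 + ((γ + c + C - α - a - A : ℝ) : ℂ) + ((β + b + B - α - a - A : ℝ) : ℂ) * ω3) :
    (T = (μ : ℂ) * ω3 ∧ U = (μ : ℂ) + 1 ∧ V = (μ : ℂ) + 1) ↔
      (α - B = -(2 * μ + 1) / 3 ∧
       β - C = -(2 * μ + 4) / 3 ∧
       γ + B + C = nr / 3 + μ ∧
       a - C = -(μ + 2) / 3 ∧
       b + B + C = (nr + μ - 1) / 3 ∧
       c - B = (1 - μ) / 3 ∧
       A + B + C = (nr + 2 * μ + 1) / 3) := by
  constructor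
  · rintro ⟨h1, h2, h3⟩
    push_cast at hT2 hU2 hV2
    have e1 : ((C + α + b - A - β - c : ℝ) : ℂ)
        + ((B + γ + a - A - β - c - μ : ℝ) : ℂ) * ω3 = 0 := by
      push_cast; linear_combination h1 - hT2
    obtain ⟨r1, r2⟩ := omega_basis e1
    have e2 : ((A + B + C - a - b - c - (μ + 1) : ℝ) : ℂ)
        + ((α + β + γ - a - b - c + 1 : ℝ) : ℂ) * ω3 = 0 := by
      push_cast; linear_combination h2 - hU2
    obtain ⟨r3, r4⟩ := omega_basis e2
    have e3 : ((γ + c + C - α - a - A - (μ + 1) : ℝ) : ℂ)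
        + ((β + b + B - α - a - A + 1 : ℝ) : ℂ) * ω3 = 0 := by
      push_cast; linear_combination h3 - hV2
    obtain ⟨r5, r6⟩ := omega_basis e3
    refine ⟨?_, ?_, ?_, ?_, ?_, ?_, ?_⟩ <;> linarith
  · rintro ⟨s1, s2, s3, s4, s5, s6, s7⟩
    have r1 : C + α + b - A - β - c = 0 := by linarith
    have r2 : B + γ + a - A - β - c = μ := by linarith
    have r3 : A + B + C - a - b - c = μ + 1 := by linarith
    have r4 : α + β + γ - a - b - c = -1 := by linarith
    have r5 : γ + c + C - α - a - A = μ + 1 := by linarith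
    have r6 : β + b + B - α - a - A = -1 := by linarith
    refine ⟨?_, ?_, ?_⟩
    · rw [hT2, r1, r2]; push_cast; ring
    · rw [hU2, r3, r4]; push_cast; ring
    · rw [hV2, r5, r6]; push_cast; ring

lemma keyII_algebra (μ e nr : ℝ) (T U V : ℂ) (α β γ a b c A B C : ℝ)
    (hem : 3 * e + μ + 2 = nr)
    (hsum : α + β + γ + a + b + c + A + B + C = nr - 2)
    (hT2 : T = ((C + α + b - A - β - c : ℝ) : ℂ) + ((B + γ + a - A - β - c : ℝ) : ℂ) * ω3)
    (hU2 : U = 1 + ((A + B + C - a - b - c : ℝ) : ℂ) + ((α + β + γ - a - b - c : ℝ) : ℂ) * ω3)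
    (hV2 : V = 1 + ((γ + c + C - α - a - A : ℝ) : ℂ) + ((β + b + B - α - a - A : ℝ) : ℂ) * ω3) :
    (T = (μ : ℂ) ∧ U = (μ : ℂ) + 1 ∧ V = (μ : ℂ) + 1) ↔
      (α = B ∧
       β = C - μ ∧
       γ = e + μ - B - C ∧
       a = C - μ ∧
       b = e + μ - B - C ∧
       c = B ∧
       A = e + μ - B - C) := by
  constructor
  · rintro ⟨h1, h2, h3⟩
    push_cast at hT2 hU2 hV2
    have e1 : ((C + α + b - A - β - c - μ : ℝ) : ℂ)
        + ((B + γ + a - A - β - c : ℝ) : ℂ) * ω3 = 0 := by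
      push_cast; linear_combination h1 - hT2
    obtain ⟨r1, r2⟩ := omega_basis e1
    have e2 : ((A + B + C - a - b - c - μ : ℝ) : ℂ)
        + ((α + β + γ - a - b - c : ℝ) : ℂ) * ω3 = 0 := by
      push_cast; linear_combination h2 - hU2
    obtain ⟨r3, r4⟩ := omega_basis e2
    have e3 : ((γ + c + C - α - a - A - μ : ℝ) : ℂ)
        + ((β + b + B - α - a - A : ℝ) : ℂ) * ω3 = 0 := by
      push_cast; linear_combination h3 - hV2
    obtain ⟨r5, r6⟩ := omega_basis e3
    refine ⟨?_, ?_, ?_, ?_, ?_, ?_, ?_⟩ <;> linarith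
  · rintro ⟨s1, s2, s3, s4, s5, s6, s7⟩
    have r1 : C + α + b - A - β - c = μ := by linarith
    have r2 : B + γ + a - A - β - c = 0 := by linarith
    have r3 : A + B + C - a - b - c = μ := by linarith
    have r4 : α + β + γ - a - b - c = 0 := by linarith
    have r5 : γ + c + C - α - a - A = μ := by linarith
    have r6 : β + b + B - α - a - A = 0 := by linarith
    refine ⟨?_, ?_, ?_⟩
    · rw [hT2, r1, r2]; push_cast; ring
    · rw [hU2, r3, r4]; push_cast; ring
    · rw [hV2, r5, r6]; push_cast; ring

theorem cubeRootSeidel_characterization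
    (n : ℕ) (Q : Matrix (Fin n) (Fin n) ℂ) (μ e : ℝ)
    (hherm : Q.IsHermitian)
    (hdiag : ∀ i, Q i i = 0)
    (hfirst : ∀ i : Fin n, i.val ≠ 0 → Q i ⟨0, lt_of_le_of_lt (Nat.zero_le _) i.isLt⟩ = 1 ∧
      Q ⟨0, lt_of_le_of_lt (Nat.zero_le _) i.isLt⟩ i = 1)
    (hoff : ∀ i j, i ≠ j → Q i j = 1 ∨ Q i j = ω3 ∨ Q i j = ω3 ^ 2)
    (hnontriv : ∃ i j : Fin n, i.val ≠ 0 ∧ j.val ≠ 0 ∧ i ≠ j ∧ Q i j ≠ 1)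
    (hem : 3 * e + μ + 2 = (n : ℝ)) :
    (Q ^ 2 = ((n : ℂ) - 1) • (1 : Matrix (Fin n) (Fin n) ℂ) + (μ : ℂ) • Q) ↔
      ((∀ i j : Fin n, i ≠ j → Q i j = ω3 →
        pathCount Q i j ω3 (ω3 ^ 2) - pathCount Q i j 1 ω3 = -(2 * μ + 1) / 3 ∧
        pathCount Q i j ω3 ω3 - pathCount Q i j 1 1 = -(2 * μ + 4) / 3 ∧
        pathCount Q i j ω3 1 + pathCount Q i j 1 ω3 + pathCount Q i j 1 1
          = (n : ℝ) / 3 + μ ∧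
        pathCount Q i j (ω3 ^ 2) (ω3 ^ 2) - pathCount Q i j 1 1 = -(μ + 2) / 3 ∧
        pathCount Q i j (ω3 ^ 2) ω3 + pathCount Q i j 1 ω3 + pathCount Q i j 1 1
          = ((n : ℝ) + μ - 1) / 3 ∧
        pathCount Q i j (ω3 ^ 2) 1 - pathCount Q i j 1 ω3 = (1 - μ) / 3 ∧
        pathCount Q i j 1 (ω3 ^ 2) + pathCount Q i j 1 ω3 + pathCount Q i j 1 1
          = ((n : ℝ) + 2 * μ + 1) / 3) ∧
      (∀ i j : Fin n, i ≠ j → i.val ≠ 0 → j.val ≠ 0 → Q i j = 1 →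
        pathCount Q i j ω3 (ω3 ^ 2) = pathCount Q i j 1 ω3 ∧
        pathCount Q i j ω3 ω3 = pathCount Q i j 1 1 - μ ∧
        pathCount Q i j ω3 1 = e + μ - pathCount Q i j 1 ω3 - pathCount Q i j 1 1 ∧
        pathCount Q i j (ω3 ^ 2) (ω3 ^ 2) = pathCount Q i j 1 1 - μ ∧
        pathCount Q i j (ω3 ^ 2) ω3
          = e + μ - pathCount Q i j 1 ω3 - pathCount Q i j 1 1 ∧
        pathCount Q i j (ω3 ^ 2) 1 = pathCount Q i j 1 ω3 ∧
        pathCount Q i j 1 (ω3 ^ 2)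
          = e + μ - pathCount Q i j 1 ω3 - pathCount Q i j 1 1)) := by
  classical
  obtain ⟨i₀, j₀, hi₀, hj₀, hij₀, hQ₀⟩ := hnontriv
  have hnpos : 0 < n := lt_of_le_of_lt (Nat.zero_le _) i₀.isLt
  set z : Fin n := ⟨0, hnpos⟩ with hz
  have hQiz : ∀ i : Fin n, i ≠ z → Q i z = 1 := by
    intro i h
    exact (hfirst i (fun h0 => h (Fin.ext h0))).1
  have hQzi : ∀ i : Fin n, i ≠ z → Q z i = 1 := by
    intro i h
    exact (hfirst i (fun h0 => h (Fin.ext h0))).2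
  have hstar : ∀ a b : Fin n, Q a b = (starRingEnd ℂ) (Q b a) := by
    intro a b
    have h := congrFun (congrFun hherm a) b
    rw [Matrix.conjTranspose_apply] at h
    exact h.symm
  -- the four structural identities
  have makeT : ∀ i j : Fin n, i ≠ j → (Q ^ 2) i j =
      ((pathCount Q i j 1 1 + pathCount Q i j ω3 (ω3 ^ 2) + pathCount Q i j (ω3 ^ 2) ω3
        - pathCount Q i j 1 (ω3 ^ 2) - pathCount Q i j ω3 ω3 - pathCount Q i j (ω3 ^ 2) 1 : ℝ) : ℂ)
      + ((pathCount Q i j 1 ω3 + pathCount Q i j ω3 1 + pathCount Q i j (ω3 ^ 2) (ω3 ^ 2)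
        - pathCount Q i j 1 (ω3 ^ 2) - pathCount Q i j ω3 ω3 - pathCount Q i j (ω3 ^ 2) 1 : ℝ) : ℂ)
        * ω3 := by
    intro i j hij
    have hm := sum_weights Q hdiag hoff i j hij (fun x y => x * y)
    have hL : (Q ^ 2) i j = ∑ k : Fin n, (if k = i ∨ k = j then 0 else Q i k * Q k j) := by
      rw [pow_two, Matrix.mul_apply]
      apply Finset.sum_congr rfl
      intro k _
      by_cases hk : k = i ∨ k = j
      · rcases hk with rfl | rfl <;> simp [hdiag]
      · rw [if_neg hk]
    rw [hL.trans hm]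
    push_cast
    linear_combination ((pathCount Q i j 1 (ω3 ^ 2) : ℂ) + (pathCount Q i j ω3 ω3 : ℂ)
        + (pathCount Q i j (ω3 ^ 2) 1 : ℂ)) * homega
      + ((pathCount Q i j ω3 (ω3 ^ 2) : ℂ) + (pathCount Q i j (ω3 ^ 2) ω3 : ℂ)
        + (pathCount Q i j (ω3 ^ 2) (ω3 ^ 2) : ℂ) * ω3) * hcube
  have makeU : ∀ i j : Fin n, i ≠ j → (∑ k, Q i k) = Q i j +
      ((pathCount Q i j 1 (ω3 ^ 2) + pathCount Q i j 1 ω3 + pathCount Q i j 1 1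
        - pathCount Q i j (ω3 ^ 2) (ω3 ^ 2) - pathCount Q i j (ω3 ^ 2) ω3
        - pathCount Q i j (ω3 ^ 2) 1 : ℝ) : ℂ)
      + ((pathCount Q i j ω3 (ω3 ^ 2) + pathCount Q i j ω3 ω3 + pathCount Q i j ω3 1
        - pathCount Q i j (ω3 ^ 2) (ω3 ^ 2) - pathCount Q i j (ω3 ^ 2) ω3
        - pathCount Q i j (ω3 ^ 2) 1 : ℝ) : ℂ) * ω3 := by
    intro i j hij
    have hm := sum_weights Q hdiag hoff i j hij (fun x _ => x)
    have hL : (∑ k, Q i k) = Q i j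
        + ∑ k : Fin n, (if k = i ∨ k = j then 0 else Q i k) := by
      have hpt : ∀ k : Fin n, Q i k
          = (if k = j then Q i j else 0) + (if k = i ∨ k = j then 0 else Q i k) := by
        intro k
        by_cases hkj : k = j
        · subst hkj; simp
        · by_cases hki : k = i
          · subst hki; simp [hdiag, hkj]
          · simp [hki, hkj]
      rw [Finset.sum_congr rfl (fun k _ => hpt k), Finset.sum_add_distrib]
      simp [Finset.sum_ite_eq']
    rw [hL.trans (by rw [hm])]
    push_cast
    linear_combination ((pathCount Q i j (ω3 ^ 2) (ω3 ^ 2) : ℂ)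
      + (pathCount Q i j (ω3 ^ 2) ω3 : ℂ) + (pathCount Q i j (ω3 ^ 2) 1 : ℂ)) * homega
  have makeV : ∀ i j : Fin n, i ≠ j → (∑ k, Q k j) = Q i j +
      ((pathCount Q i j ω3 1 + pathCount Q i j (ω3 ^ 2) 1 + pathCount Q i j 1 1
        - pathCount Q i j ω3 (ω3 ^ 2) - pathCount Q i j (ω3 ^ 2) (ω3 ^ 2)
        - pathCount Q i j 1 (ω3 ^ 2) : ℝ) : ℂ)
      + ((pathCount Q i j ω3 ω3 + pathCount Q i j (ω3 ^ 2) ω3 + pathCount Q i j 1 ω3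
        - pathCount Q i j ω3 (ω3 ^ 2) - pathCount Q i j (ω3 ^ 2) (ω3 ^ 2)
        - pathCount Q i j 1 (ω3 ^ 2) : ℝ) : ℂ) * ω3 := by
    intro i j hij
    have hm := sum_weights Q hdiag hoff i j hij (fun _ y => y)
    have hL : (∑ k, Q k j) = Q i j
        + ∑ k : Fin n, (if k = i ∨ k = j then 0 else Q k j) := by
      have hpt : ∀ k : Fin n, Q k j
          = (if k = i then Q i j else 0) + (if k = i ∨ k = j then 0 else Q k j) := by
        intro k
        by_cases hki : k = i
        · subst hki; simp
        · by_cases hkj : k = j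
          · subst hkj; simp [hdiag, hki]
          · simp [hki, hkj]
      rw [Finset.sum_congr rfl (fun k _ => hpt k), Finset.sum_add_distrib]
      simp [Finset.sum_ite_eq']
    rw [hL.trans (by rw [hm])]
    push_cast
    linear_combination ((pathCount Q i j 1 (ω3 ^ 2) : ℂ)
      + (pathCount Q i j ω3 (ω3 ^ 2) : ℂ) + (pathCount Q i j (ω3 ^ 2) (ω3 ^ 2) : ℂ)) * homega
  have makeSum : ∀ i j : Fin n, i ≠ j →
      pathCount Q i j ω3 (ω3 ^ 2) + pathCount Q i j ω3 ω3 + pathCount Q i j ω3 1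
      + pathCount Q i j (ω3 ^ 2) (ω3 ^ 2) + pathCount Q i j (ω3 ^ 2) ω3
      + pathCount Q i j (ω3 ^ 2) 1 + pathCount Q i j 1 (ω3 ^ 2) + pathCount Q i j 1 ω3
      + pathCount Q i j 1 1 = (n : ℝ) - 2 := by
    intro i j hij
    have hm := sum_weights Q hdiag hoff i j hij (fun _ _ => (1 : ℂ))
    have hL : (∑ k : Fin n, (if k = i ∨ k = j then (0 : ℂ) else 1)) = (n : ℂ) - 2 := by
      have hpt : ∀ k : Fin n, (if k = i ∨ k = j then (0 : ℂ) else 1)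
          = 1 - (if k = i then 1 else 0) - (if k = j then 1 else 0) := by
        intro k
        by_cases h1 : k = i
        · subst h1; simp [hij]
        · by_cases h2 : k = j <;> simp [h1, h2, Ne.symm hij]
      rw [Finset.sum_congr rfl (fun k _ => hpt k), Finset.sum_sub_distrib,
        Finset.sum_sub_distrib]
      simp [Finset.sum_ite_eq', Finset.card_univ]
      ring
    have hC := (hm.symm.trans hL)
    have hr : ((pathCount Q i j ω3 (ω3 ^ 2) + pathCount Q i j ω3 ω3 + pathCount Q i j ω3 1
      + pathCount Q i j (ω3 ^ 2) (ω3 ^ 2) + pathCount Q i j (ω3 ^ 2) ω3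
      + pathCount Q i j (ω3 ^ 2) 1 + pathCount Q i j 1 (ω3 ^ 2) + pathCount Q i j 1 ω3
      + pathCount Q i j 1 1 : ℝ) : ℂ) = (((n : ℝ) - 2 : ℝ) : ℂ) := by
      push_cast
      linear_combination hC
    exact_mod_cast hr
  -- the two key equivalences
  have keyI : ∀ i j : Fin n, i ≠ j → Q i j = ω3 →
      (((Q ^ 2) i j = (μ : ℂ) * ω3 ∧ (∑ k, Q i k) = (μ : ℂ) + 1 ∧ (∑ k, Q k j) = (μ : ℂ) + 1) ↔
        (pathCount Q i j ω3 (ω3 ^ 2) - pathCount Q i j 1 ω3 = -(2 * μ + 1) / 3 ∧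
        pathCount Q i j ω3 ω3 - pathCount Q i j 1 1 = -(2 * μ + 4) / 3 ∧
        pathCount Q i j ω3 1 + pathCount Q i j 1 ω3 + pathCount Q i j 1 1
          = (n : ℝ) / 3 + μ ∧
        pathCount Q i j (ω3 ^ 2) (ω3 ^ 2) - pathCount Q i j 1 1 = -(μ + 2) / 3 ∧
        pathCount Q i j (ω3 ^ 2) ω3 + pathCount Q i j 1 ω3 + pathCount Q i j 1 1
          = ((n : ℝ) + μ - 1) / 3 ∧
        pathCount Q i j (ω3 ^ 2) 1 - pathCount Q i j 1 ω3 = (1 - μ) / 3 ∧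
        pathCount Q i j 1 (ω3 ^ 2) + pathCount Q i j 1 ω3 + pathCount Q i j 1 1
          = ((n : ℝ) + 2 * μ + 1) / 3)) := by
    intro i j hij hω
    have h2 := makeU i j hij
    rw [hω] at h2
    have h3 := makeV i j hij
    rw [hω] at h3
    exact keyI_algebra μ (n : ℝ) _ _ _ _ _ _ _ _ _ _ _ _ (makeSum i j hij)
      (makeT i j hij) h2 h3
  have keyII : ∀ i j : Fin n, i ≠ j → Q i j = 1 →
      (((Q ^ 2) i j = (μ : ℂ) ∧ (∑ k, Q i k) = (μ : ℂ) + 1 ∧ (∑ k, Q k j) = (μ : ℂ) + 1) ↔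
        (pathCount Q i j ω3 (ω3 ^ 2) = pathCount Q i j 1 ω3 ∧
        pathCount Q i j ω3 ω3 = pathCount Q i j 1 1 - μ ∧
        pathCount Q i j ω3 1 = e + μ - pathCount Q i j 1 ω3 - pathCount Q i j 1 1 ∧
        pathCount Q i j (ω3 ^ 2) (ω3 ^ 2) = pathCount Q i j 1 1 - μ ∧
        pathCount Q i j (ω3 ^ 2) ω3
          = e + μ - pathCount Q i j 1 ω3 - pathCount Q i j 1 1 ∧
        pathCount Q i j (ω3 ^ 2) 1 = pathCount Q i j 1 ω3 ∧
        pathCount Q i j 1 (ω3 ^ 2)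
          = e + μ - pathCount Q i j 1 ω3 - pathCount Q i j 1 1)) := by
    intro i j hij h1
    have h2 := makeU i j hij
    rw [h1] at h2
    have h3 := makeV i j hij
    rw [h1] at h3
    exact keyII_algebra μ e (n : ℝ) _ _ _ _ _ _ _ _ _ _ _ _ hem (makeSum i j hij)
      (makeT i j hij) h2 h3
  -- (Q^2) entries along the first row/column
  have hQ2row : ∀ i : Fin n, (Q ^ 2) i z = (∑ k, Q i k) - Q i z := by
    intro i
    have hstep : ∀ k : Fin n, Q i k * Q k z = Q i k - (if k = z then Q i k else 0) := by
      intro k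
      by_cases hk : k = z
      · subst hk; simp [hdiag]
      · simp [hk, hQiz k hk]
    rw [pow_two, Matrix.mul_apply, Finset.sum_congr rfl (fun k _ => hstep k),
      Finset.sum_sub_distrib]
    simp [Finset.sum_ite_eq']
  have hQ2col : ∀ j : Fin n, (Q ^ 2) z j = (∑ k, Q k j) - Q z j := by
    intro j
    have hstep : ∀ k : Fin n, Q z k * Q k j = Q k j - (if k = z then Q k j else 0) := by
      intro k
      by_cases hk : k = z
      · subst hk; simp [hdiag]
      · simp [hk, hQzi k hk]
    rw [pow_two, Matrix.mul_apply, Finset.sum_congr rfl (fun k _ => hstep k),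
      Finset.sum_sub_distrib]
    simp [Finset.sum_ite_eq']
  constructor
  · -- forward
    intro H
    have hEntry : ∀ i j : Fin n, i ≠ j → (Q ^ 2) i j = (μ : ℂ) * Q i j := by
      intro i j hij
      have h := congrFun (congrFun H i) j
      simpa [Matrix.add_apply, Matrix.smul_apply, Matrix.one_apply, hij] using h
    have hrow : ∀ i : Fin n, i ≠ z → (∑ k, Q i k) = (μ : ℂ) + 1 := by
      intro i hi
      have h := hEntry i z hi
      rw [hQ2row i, hQiz i hi] at h
      linear_combination h
    have hcol : ∀ j : Fin n, j ≠ z → (∑ k, Q k j) = (μ : ℂ) + 1 := by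
      intro j hj
      have h := hEntry z j (Ne.symm hj)
      rw [hQ2col j, hQzi j hj] at h
      linear_combination h
    constructor
    · intro i j hij hω
      have hjz : j ≠ z := by
        intro h
        rw [h, hQiz i (h ▸ hij)] at hω
        exact omega_ne_one hω.symm
      have hiz : i ≠ z := by
        intro h
        rw [h, hQzi j (fun hh => hij (h.trans hh.symm))] at hω
        exact omega_ne_one hω.symm
      exact (keyI i j hij hω).mp
        ⟨by rw [hEntry i j hij, hω], hrow i hiz, hcol j hjz⟩
    · intro i j hij hi0 hj0 h1
      have hiz : i ≠ z := fun h => hi0 (by rw [h])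
      have hjz : j ≠ z := fun h => hj0 (by rw [h])
      exact (keyII i j hij h1).mp
        ⟨by rw [hEntry i j hij, h1, mul_one], hrow i hiz, hcol j hjz⟩
  · -- backward
    rintro ⟨KI, KII⟩
    have hrow' : ∀ i : Fin n, i ≠ z → (∑ k, Q i k) = (μ : ℂ) + 1 := by
      intro i hi
      obtain ⟨k0, hk0i, hk0z⟩ : ∃ k0 : Fin n, k0 ≠ i ∧ k0 ≠ z := by
        by_cases h : i₀ = i
        · exact ⟨j₀, by rw [← h]; exact Ne.symm hij₀, fun hh => hj₀ (by rw [hh])⟩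
        · exact ⟨i₀, h, fun hh => hi₀ (by rw [hh])⟩
      have hk0val : k0.val ≠ 0 := fun h => hk0z (Fin.ext h)
      have hival : i.val ≠ 0 := fun h => hi (Fin.ext h)
      rcases hoff i k0 (Ne.symm hk0i) with h1 | h1 | h1
      · exact ((keyII i k0 (Ne.symm hk0i) h1).mpr
          (KII i k0 (Ne.symm hk0i) hival hk0val h1)).2.1
      · exact ((keyI i k0 (Ne.symm hk0i) h1).mpr (KI i k0 (Ne.symm hk0i) h1)).2.1
      · have h2 : Q k0 i = ω3 := by rw [hstar k0 i, h1, conj_omega_sq]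
        have hcol := ((keyI k0 i hk0i h2).mpr (KI k0 i hk0i h2)).2.2
        calc (∑ k, Q i k) = ∑ k, (starRingEnd ℂ) (Q k i) :=
              Finset.sum_congr rfl (fun k _ => hstar i k)
          _ = (starRingEnd ℂ) (∑ k, Q k i) := (map_sum _ _ _).symm
          _ = (μ : ℂ) + 1 := by rw [hcol]; simp
    have hcol' : ∀ j : Fin n, j ≠ z → (∑ k, Q k j) = (μ : ℂ) + 1 := by
      intro j hj
      calc (∑ k, Q k j) = ∑ k, (starRingEnd ℂ) (Q j k) :=
            Finset.sum_congr rfl (fun k _ => hstar k j)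
        _ = (starRingEnd ℂ) (∑ k, Q j k) := (map_sum _ _ _).symm
        _ = (μ : ℂ) + 1 := by rw [hrow' j hj]; simp
    rw [← Matrix.ext_iff]
    intro i j
    simp only [Matrix.add_apply, Matrix.smul_apply, Matrix.one_apply, smul_eq_mul]
    by_cases hij : i = j
    · subst hij
      rw [if_pos rfl, hdiag, mul_one, mul_zero, add_zero, pow_two, Matrix.mul_apply]
      have hstep : ∀ k : Fin n, Q i k * Q k i = if k = i then 0 else 1 := by
        intro k
        by_cases hk : k = i
        · subst hk; simp [hdiag]
        · rw [if_neg hk, hstar k i]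
          rcases hoff i k (fun h => hk h.symm) with h | h | h <;> rw [h]
          · simp
          · rw [conj_omega]; linear_combination hcube
          · rw [conj_omega_sq]; linear_combination hcube
      rw [Finset.sum_congr rfl (fun k _ => hstep k)]
      have hpt : ∀ k : Fin n, (if k = i then (0 : ℂ) else 1)
          = 1 - (if k = i then 1 else 0) := by
        intro k; by_cases h : k = i <;> simp [h]
      rw [Finset.sum_congr rfl (fun k _ => hpt k), Finset.sum_sub_distrib]
      simp [Finset.sum_ite_eq', Finset.card_univ]
    · rw [if_neg hij, mul_zero, zero_add]
      by_cases hiz : i = z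
      · subst hiz
        have hjz : j ≠ z := Ne.symm hij
        rw [hQ2col j, hcol' j hjz, hQzi j hjz]
        ring
      · by_cases hjz : j = z
        · subst hjz
          rw [hQ2row i, hrow' i hiz, hQiz i hiz]
          ring
        · have hi0 : i.val ≠ 0 := fun h => hiz (Fin.ext h)
          have hj0 : j.val ≠ 0 := fun h => hjz (Fin.ext h)
          rcases hoff i j hij with h1 | h1 | h1
          · rw [h1, mul_one]
            exact ((keyII i j hij h1).mpr (KII i j hij hi0 hj0 h1)).1
          · rw [h1]
            exact ((keyI i j hij h1).mpr (KI i j hij h1)).1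
          · have h2 : Q j i = ω3 := by rw [hstar j i, h1, conj_omega_sq]
            have hT := ((keyI j i (Ne.symm hij) h2).mpr (KI j i (Ne.symm hij) h2)).1
            have hQ2star : (Q ^ 2) i j = (starRingEnd ℂ) ((Q ^ 2) j i) := by
              rw [pow_two, Matrix.mul_apply, Matrix.mul_apply, map_sum]
              apply Finset.sum_congr rfl
              intro k _
              rw [map_mul, ← hstar k j, ← hstar i k]
              ring
            rw [hQ2star, hT, h1, map_mul, conj_omega, Complex.conj_ofReal]
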